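/- arXiv:2212.12870 — 4 statements merged into one kernel-verified Lean document; each statement's English description precedes it below -/
import Mathlib

section
/- Let Q₁ be a d₁×d₁ complex matrix and Q₂ a d₂×d₂ complex matrix such that the Kronecker product Q₁ ⊗ Q₂ is unitary. Then there exists a positive real number a such that (1/√a)·Q₁ and √a·Q₂ are both unitary matrices. -/
open Matrix Kronecker

/-!
Since `(Q₁ ⊗ Q₂)(Q₁ ⊗ Q₂)† = (Q₁Q₁†) ⊗ (Q₂Q₂†)`, unitarity says `A ⊗ B = 1` for the Gram
matrices `A = Q₁Q₁†`, `B = Q₂Q₂†`. Comparing entries, `A_ij B_kl = δ_ij δ_kl` forces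
`A = a • 1` and `B = a⁻¹ • 1` with `a = A₀₀ ≠ 0`, and `a > 0` because `A` is positive
semidefinite.
-/

namespace Matrix

variable {K R m n : Type*}

theorem exists_eq_smul_one_of_kronecker_eq_one [Field K] [DecidableEq m] [DecidableEq n]
    [Nonempty m] [Nonempty n] {A : Matrix m m K} {B : Matrix n n K} (h : A ⊗ₖ B = 1) :
    ∃ c : K, c ≠ 0 ∧ A = c • 1 ∧ B = c⁻¹ • 1 := by
  obtain ⟨i⟩ := ‹Nonempty m›
  obtain ⟨k⟩ := ‹Nonempty n›
  have entry (i j : m) (k l : n) :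
      A i j * B k l = (1 : Matrix m m K) i j * (1 : Matrix n n K) k l :=
    congrFun (congrFun (h.trans one_kronecker_one.symm) (i, k)) (j, l)
  have hik : A i i * B k k = 1 := by simpa using entry i i k k
  have hc : A i i ≠ 0 := left_ne_zero_of_mul_eq_one hik
  refine ⟨A i i, hc, ?_, ?_⟩
  · ext j j'
    calc A j j' = A j j' * B k k * A i i := by rw [mul_assoc, mul_comm (B k k), hik, mul_one]
      _ = (A i i • (1 : Matrix m m K)) j j' := by rw [entry]; simp [mul_comm]
  · ext l l'
    calc B l l' = (A i i)⁻¹ * (A i i * B l l') := by rw [inv_mul_cancel_left₀ hc]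
      _ = ((A i i)⁻¹ • (1 : Matrix n n K)) l l' := by rw [entry]; simp

theorem smul_mul_conjTranspose_smul [Fintype n] [CommSemiring R] [StarRing R] (c : R)
    (Q : Matrix m n R) : (c • Q) * (c • Q)ᴴ = (c * star c) • (Q * Qᴴ) := by
  rw [conjTranspose_smul, Matrix.smul_mul, Matrix.mul_smul, smul_smul]

open scoped ComplexOrder in
theorem exists_pos_real_of_mul_conjTranspose_eq_smul_one [Fintype m] [Fintype n]
    [DecidableEq m] [Nonempty m] {Q : Matrix m n ℂ} {c : ℂ} (hc : c ≠ 0) (hQ : Q * Qᴴ = c • 1) :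
    ∃ a : ℝ, 0 < a ∧ (a : ℂ) = c := by
  obtain ⟨i⟩ := ‹Nonempty m›
  have hc_nonneg : 0 ≤ c := by
    simpa [hQ] using (posSemidef_self_mul_conjTranspose Q).diag_nonneg (i := i)
  exact RCLike.pos_iff_exists_ofReal.mp (hc_nonneg.lt_of_ne' hc)

end Matrix

/-- If the Kronecker product `Q₁ ⊗ Q₂` of square complex matrices is unitary, then there
is a positive real `a` such that `(1/√a)·Q₁` and `√a·Q₂` are both unitary. -/
theorem factors_unitary_of_kronecker_unitary {d₁ d₂ : ℕ} (hd₁ : 1 ≤ d₁) (hd₂ : 1 ≤ d₂)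
    (Q₁ : Matrix (Fin d₁) (Fin d₁) ℂ) (Q₂ : Matrix (Fin d₂) (Fin d₂) ℂ)
    (h : (Q₁ ⊗ₖ Q₂) * (Q₁ ⊗ₖ Q₂)ᴴ = 1) :
    ∃ a : ℝ, 0 < a ∧
      ((1 / (Real.sqrt a : ℂ)) • Q₁) * ((1 / (Real.sqrt a : ℂ)) • Q₁)ᴴ = 1 ∧
      (((Real.sqrt a : ℂ)) • Q₂) * (((Real.sqrt a : ℂ)) • Q₂)ᴴ = 1 := by
  have : NeZero d₁ := ⟨by omega⟩
  have : NeZero d₂ := ⟨by omega⟩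
  have hgram : (Q₁ * Q₁ᴴ) ⊗ₖ (Q₂ * Q₂ᴴ) = 1 := by
    rw [mul_kronecker_mul, ← conjTranspose_kronecker, h]
  obtain ⟨c, hc, hA, hB⟩ := exists_eq_smul_one_of_kronecker_eq_one hgram
  obtain ⟨a, ha, rfl⟩ := exists_pos_real_of_mul_conjTranspose_eq_smul_one hc hA
  have hsqrt : (Real.sqrt a : ℂ) * star (Real.sqrt a : ℂ) = a := by
    rw [Complex.star_def, Complex.conj_ofReal, ← Complex.ofReal_mul, Real.mul_self_sqrt ha.le]
  have ha0 : (a : ℂ) ≠ 0 := by exact_mod_cast ha.ne'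
  have h₁ : 1 / (Real.sqrt a : ℂ) * star (1 / (Real.sqrt a : ℂ)) * a = 1 := by
    rw [star_div₀, star_one, div_mul_div_comm, one_mul, hsqrt, one_div_mul_cancel ha0]
  have h₂ : (Real.sqrt a : ℂ) * star (Real.sqrt a : ℂ) * (a : ℂ)⁻¹ = 1 := by
    rw [hsqrt, mul_inv_cancel₀ ha0]
  refine ⟨a, ha, ?_, ?_⟩
  · rw [smul_mul_conjTranspose_smul, hA, smul_smul, h₁, one_smul]
  · rw [smul_mul_conjTranspose_smul, hB, smul_smul, h₂, one_smul]
end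

section
/- If Q₁ and Q₂ are complex square matrices of sizes d₁ and d₂ (with d₁, d₂ ≥ 1) such that (Q₁Q₁†) ⊗ (Q₂Q₂†) equals the identity matrix of size d₁d₂, then Q₁Q₁† and Q₂Q₂† are positive real scalar multiples of the identity, with the scalars multiplying to 1. -/
open Matrix Kronecker

/-! Comparing entries of `A ⊗ₖ B` with those of `1 ⊗ₖ 1` gives `A i i' * B j j' = δᵢᵢ' δⱼⱼ'`, so
fixing one diagonal entry of either factor shows that the other one is a scalar matrix, with
scalars that are mutually inverse. For `A = Q Qᴴ` the scalar is a diagonal entry of a positive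
semidefinite matrix, hence a nonnegative real, and it is nonzero because it is invertible. -/

namespace Matrix

variable {R m n : Type*} [CommSemiring R] [DecidableEq m] [DecidableEq n]
  {A : Matrix m m R} {B : Matrix n n R}

theorem eq_smul_one_of_kronecker_eq_one_left (h : A ⊗ₖ B = 1) {a : R} {j : n}
    (ha : a * B j j = 1) : A = a • 1 := by
  ext i i'
  have hij : A i i' * B j j = (1 : Matrix m m R) i i' * 1 := by
    simpa [← one_kronecker_one] using congr_fun₂ h (i, j) (i', j)
  calc A i i' = A i i' * B j j * a := by rw [mul_assoc, mul_comm (B j j), ha, mul_one]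
    _ = (a • 1 : Matrix m m R) i i' := by rw [hij, smul_apply, smul_eq_mul, mul_one, mul_comm]

theorem eq_smul_one_of_kronecker_eq_one_right (h : A ⊗ₖ B = 1) {b : R} {i : m}
    (hb : A i i * b = 1) : B = b • 1 := by
  ext j j'
  have hij : A i i * B j j' = 1 * (1 : Matrix n n R) j j' := by
    simpa [← one_kronecker_one] using congr_fun₂ h (i, j) (i, j')
  calc B j j' = A i i * B j j' * b := by rw [mul_right_comm, hb, one_mul]
    _ = (b • 1 : Matrix n n R) j j' := by rw [hij, one_mul, smul_apply, smul_eq_mul, mul_comm]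

theorem exists_eq_smul_one_of_kronecker_eq_one_s6 [Nonempty m] [Nonempty n] (h : A ⊗ₖ B = 1) :
    ∃ a b : R, a * b = 1 ∧ A = a • 1 ∧ B = b • 1 := by
  obtain ⟨i⟩ := ‹Nonempty m›
  obtain ⟨j⟩ := ‹Nonempty n›
  have hab : A i i * B j j = 1 := by
    simpa [← one_kronecker_one] using congr_fun₂ h (i, j) (i, j)
  exact ⟨A i i, B j j, hab, eq_smul_one_of_kronecker_eq_one_left h hab,
    eq_smul_one_of_kronecker_eq_one_right h hab⟩

theorem PosSemidef.nonneg_of_eq_smul_one {R : Type*} [Ring R] [PartialOrder R] [StarRing R]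
    [Nonempty m] {A : Matrix m m R} {c : R} (hA : A.PosSemidef) (hc : A = c • 1) : 0 ≤ c := by
  obtain ⟨i⟩ := ‹Nonempty m›
  simpa [hc] using hA.diag_nonneg (i := i)

end Matrix

open scoped ComplexOrder

/-- If `(Q₁Q₁†) ⊗ (Q₂Q₂†) = I`, then `Q₁Q₁†` and `Q₂Q₂†` are positive real scalar
multiples of the identity, with the scalars multiplying to `1`. -/
theorem scalar_of_kronecker_eq_one {d₁ d₂ : ℕ} (hd₁ : 1 ≤ d₁) (hd₂ : 1 ≤ d₂)
    (Q₁ : Matrix (Fin d₁) (Fin d₁) ℂ) (Q₂ : Matrix (Fin d₂) (Fin d₂) ℂ)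
    (h : (Q₁ * Q₁ᴴ) ⊗ₖ (Q₂ * Q₂ᴴ) = 1) :
    ∃ a b : ℝ, 0 < a ∧ 0 < b ∧ a * b = 1 ∧
      Q₁ * Q₁ᴴ = (a : ℂ) • 1 ∧ Q₂ * Q₂ᴴ = (b : ℂ) • 1 := by
  have : Nonempty (Fin d₁) := Fin.pos_iff_nonempty.mp hd₁
  have : Nonempty (Fin d₂) := Fin.pos_iff_nonempty.mp hd₂
  obtain ⟨a, b, hab, hA, hB⟩ := exists_eq_smul_one_of_kronecker_eq_one_s6 h
  have ha := (posSemidef_self_mul_conjTranspose Q₁).nonneg_of_eq_smul_one hA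
  have hb := (posSemidef_self_mul_conjTranspose Q₂).nonneg_of_eq_smul_one hB
  obtain ⟨r, hr, rfl⟩ :=
    RCLike.pos_iff_exists_ofReal.mp (ha.lt_of_ne (left_ne_zero_of_mul_eq_one hab).symm)
  obtain ⟨s, hs, rfl⟩ :=
    RCLike.pos_iff_exists_ofReal.mp (hb.lt_of_ne (right_ne_zero_of_mul_eq_one hab).symm)
  exact ⟨r, s, hr, hs, Complex.ofReal_injective (by push_cast; exact hab), hA, hB⟩
end

section
/- Two N-partite pure states with coefficient tensors X and Y are SLOCC equivalent if and only if for each i there exist an invertible d_i×d_i matrix P_i and an invertible (∏_{j≠i} d_j)×(∏_{j≠i} d_j) matrix Q_i such that Y_{(i)} = P_i X_{(i)} Q_iᵗ and Q_i decomposes as a Kronecker product Q_i = M_N ⊗ ⋯ ⊗ M_{i+1} ⊗ M_{i-1} ⊗ ⋯ ⊗ M₁ of invertible matrices of sizes d_N, …, d_{i+1}, d_{i-1}, …, d₁. (For the 'if' direction it suffices that the condition hold for a single i.) -/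
open Matrix

/-- The mode-`i` matricization of an `N`-way tensor: rows indexed by the `i`-th index,
columns indexed by the remaining indices. -/
def modeMat {N : ℕ} (d : Fin N → ℕ) (i : Fin N) (X : (∀ j, Fin (d j)) → ℂ) :
    Matrix (Fin (d i)) (∀ j : {j : Fin N // j ≠ i}, Fin (d j.1)) ℂ :=
  Matrix.of fun a c =>
    X (fun j => if h : j = i then Fin.cast (congrArg d h).symm a else c ⟨j, h⟩)

/-- SLOCC equivalence of the coefficient tensors `X`, `Y`:
`Y = (M₁ ⊗ ⋯ ⊗ M_N)·X` entrywise, with each `Mᵢ` invertible. -/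
def SloccEquiv {N : ℕ} (d : Fin N → ℕ) (X Y : (∀ j, Fin (d j)) → ℂ) : Prop :=
  ∃ M : ∀ i, Matrix (Fin (d i)) (Fin (d i)) ℂ, (∀ i, IsUnit (M i)) ∧
    ∀ idx, Y idx = ∑ k : ∀ j, Fin (d j), (∏ i, M i (idx i) (k i)) * X k

/-- The mode-`i` condition: `Y₍ᵢ₎ = Pᵢ X₍ᵢ₎ Qᵢᵗ` for invertible `Pᵢ`, `Qᵢ` where `Qᵢ` is
a Kronecker product of invertible matrices over the remaining modes. -/
def ModeCond {N : ℕ} (d : Fin N → ℕ) (X Y : (∀ j, Fin (d j)) → ℂ) (i : Fin N) : Prop :=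
  ∃ (P : Matrix (Fin (d i)) (Fin (d i)) ℂ)
    (Q : Matrix (∀ j : {j : Fin N // j ≠ i}, Fin (d j.1))
         (∀ j : {j : Fin N // j ≠ i}, Fin (d j.1)) ℂ),
    IsUnit P ∧ IsUnit Q ∧ modeMat d i Y = P * modeMat d i X * Qᵀ ∧
    ∃ M : ∀ j : Fin N, Matrix (Fin (d j)) (Fin (d j)) ℂ, (∀ j, IsUnit (M j)) ∧
      Q = Matrix.of fun c c' => ∏ j : {j : Fin N // j ≠ i}, M j.1 (c j) (c' j)

section Aux

variable {N : ℕ} {d : Fin N → ℕ}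

/-- Kronecker-type product of the matrices `M j` over all modes `j ≠ i`. -/
def kron (i : Fin N) (M : ∀ j : Fin N, Matrix (Fin (d j)) (Fin (d j)) ℂ) :
    Matrix (∀ j : {j : Fin N // j ≠ i}, Fin (d j.1))
      (∀ j : {j : Fin N // j ≠ i}, Fin (d j.1)) ℂ :=
  Matrix.of fun c c' => ∏ j : {j : Fin N // j ≠ i}, M j.1 (c j) (c' j)

lemma kron_mul (i : Fin N) (M M' : ∀ j : Fin N, Matrix (Fin (d j)) (Fin (d j)) ℂ) :
    kron i M * kron i M' = kron (d := d) i (fun j => M j * M' j) := by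
  ext c c''
  have h := Fintype.prod_sum
    (fun (j : {j : Fin N // j ≠ i}) (b : Fin (d j.1)) => M j.1 (c j) b * M' j.1 b (c'' j))
  simp only [kron, Matrix.mul_apply, Matrix.of_apply, h, Finset.prod_mul_distrib]

lemma kron_one (i : Fin N) : kron (d := d) i (fun _ => 1) = 1 := by
  ext c c'
  by_cases h : c = c'
  · subst h; simp [kron, Matrix.one_apply]
  · obtain ⟨j, hj⟩ := Function.ne_iff.mp h
    rw [Matrix.one_apply_ne h]
    exact Finset.prod_eq_zero (Finset.mem_univ j) (Matrix.one_apply_ne hj)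

lemma isUnit_kron (i : Fin N) (M : ∀ j : Fin N, Matrix (Fin (d j)) (Fin (d j)) ℂ)
    (hM : ∀ j, IsUnit (M j)) : IsUnit (kron i M) := by
  refine ⟨⟨kron i M, kron i (fun j => (M j)⁻¹), ?_, ?_⟩, rfl⟩
  · rw [kron_mul]
    have : (fun j => M j * (M j)⁻¹) = fun _ : Fin N => (1 : Matrix _ _ ℂ) := by
      funext j
      exact Matrix.mul_nonsing_inv _ ((Matrix.isUnit_iff_isUnit_det _).mp (hM j))
    rw [this, kron_one]
  · rw [kron_mul]
    have : (fun j => (M j)⁻¹ * M j) = fun _ : Fin N => (1 : Matrix _ _ ℂ) := by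
      funext j
      exact Matrix.nonsing_inv_mul _ ((Matrix.isUnit_iff_isUnit_det _).mp (hM j))
    rw [this, kron_one]

lemma symm_apply_same {β : Fin N → Type*} (i : Fin N) (a : β i)
    (c : ∀ j : {j : Fin N // j ≠ i}, β j.1) :
    (Equiv.piSplitAt i β).symm (a, c) i = a :=
  congrArg Prod.fst ((Equiv.piSplitAt i β).apply_symm_apply (a, c))

lemma symm_apply_ne {β : Fin N → Type*} (i : Fin N) (a : β i)
    (c : ∀ j : {j : Fin N // j ≠ i}, β j.1) (j : {j : Fin N // j ≠ i}) :
    (Equiv.piSplitAt i β).symm (a, c) j.1 = c j :=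
  congrFun (congrArg Prod.snd ((Equiv.piSplitAt i β).apply_symm_apply (a, c))) j

lemma modeMat_apply (i : Fin N) (X : (∀ j, Fin (d j)) → ℂ) (a : Fin (d i))
    (c : ∀ j : {j : Fin N // j ≠ i}, Fin (d j.1)) :
    modeMat d i X a c = X ((Equiv.piSplitAt i fun j => Fin (d j)).symm (a, c)) := by
  unfold modeMat
  simp only [Matrix.of_apply]
  congr 1
  funext j
  by_cases h : j = i
  · subst h
    simp [Equiv.piSplitAt]
  · simp [Equiv.piSplitAt, h]

lemma prod_split {M : Type*} [CommMonoid M] (i : Fin N) (f : Fin N → M) :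
    ∏ j, f j = f i * ∏ j : {j : Fin N // j ≠ i}, f j.1 := by
  rw [Fintype.prod_eq_mul_prod_compl i f]
  congr 1
  exact (Finset.prod_subtype {i}ᶜ (by simp) f)

lemma key (i : Fin N) (M : ∀ j : Fin N, Matrix (Fin (d j)) (Fin (d j)) ℂ)
    (X : (∀ j, Fin (d j)) → ℂ) (a : Fin (d i))
    (c : ∀ j : {j : Fin N // j ≠ i}, Fin (d j.1)) :
    (M i * modeMat d i X * (kron i M)ᵀ) a c
      = ∑ k : ∀ j, Fin (d j),
          (∏ j, M j ((Equiv.piSplitAt i fun j => Fin (d j)).symm (a, c) j) (k j)) * X k := by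
  rw [← Equiv.sum_comp (Equiv.piSplitAt i fun j => Fin (d j)).symm, Fintype.sum_prod_type]
  simp only [Matrix.mul_apply, Matrix.transpose_apply, kron, Matrix.of_apply, Finset.sum_mul]
  rw [Finset.sum_comm]
  refine Finset.sum_congr rfl fun b _ => Finset.sum_congr rfl fun c' _ => ?_
  rw [prod_split i, modeMat_apply]
  simp only [symm_apply_same, symm_apply_ne]
  ring

end Aux

/-- Two `N`-partite pure states are SLOCC equivalent iff for each mode `i` the
matricizations satisfy `Y₍ᵢ₎ = Pᵢ X₍ᵢ₎ Qᵢᵗ` with `Pᵢ` invertible and `Qᵢ` an invertible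
Kronecker product over the remaining modes; moreover for the "if" direction the
condition at a single mode `i` already suffices. -/
theorem slocc_iff_mode_matricization {N : ℕ} (hN : 0 < N) (d : Fin N → ℕ)
    (X Y : (∀ j, Fin (d j)) → ℂ) :
    (SloccEquiv d X Y ↔ ∀ i, ModeCond d X Y i) ∧
    (∀ i, ModeCond d X Y i → SloccEquiv d X Y) := by
  have rev : ∀ i, ModeCond d X Y i → SloccEquiv d X Y := by
    rintro i ⟨P, Q, hP, hQ, hEq, M, hM, rfl⟩
    classical
    set M' : ∀ j : Fin N, Matrix (Fin (d j)) (Fin (d j)) ℂ := Function.update M i P with hM'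
    have hM'unit : ∀ j, IsUnit (M' j) := by
      intro j
      by_cases h : j = i
      · subst h; simpa [hM', Function.update_self] using hP
      · simpa [hM', Function.update_of_ne h] using hM j
    have hkron : kron i M' = Matrix.of fun c c' =>
        ∏ j : {j : Fin N // j ≠ i}, M j.1 (c j) (c' j) := by
      ext c c'
      simp only [kron, Matrix.of_apply]
      exact Finset.prod_congr rfl fun j _ => by
        rw [show M' j.1 = M j.1 from Function.update_of_ne j.2 P M]
    have hMi : M' i = P := Function.update_self i P M
    refine ⟨M', hM'unit, fun idx => ?_⟩
    have h2 : (Equiv.piSplitAt i fun j => Fin (d j)).symm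
        (idx i, fun j : {j : Fin N // j ≠ i} => idx j.1) = idx :=
      (Equiv.piSplitAt i fun j => Fin (d j)).symm_apply_apply idx
    have h1 : Y idx = modeMat d i Y (idx i) (fun j : {j : Fin N // j ≠ i} => idx j.1) := by
      rw [modeMat_apply, h2]
    rw [h1, hEq, ← hMi, ← hkron, key, h2]
  have fwd : SloccEquiv d X Y → ∀ i, ModeCond d X Y i := by
    rintro ⟨M, hM, hY⟩ i
    refine ⟨M i, kron i M, hM i, isUnit_kron i M hM, ?_, M, hM, rfl⟩
    ext a c
    rw [modeMat_apply, key]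
    exact hY _
  exact ⟨⟨fwd, fun h => rev ⟨0, hN⟩ (h ⟨0, hN⟩)⟩, rev⟩
end

section
/- Let M be an invertible (mn)×(mn) complex matrix viewed as an m×m array of n×n blocks. If the realignment R(M) has rank 1, then there exist invertible matrices m₁ ∈ GL(m,ℂ) and m₂ ∈ GL(n,ℂ) such that M = m₁ ⊗ m₂. -/
open Matrix Kronecker

/-- The realignment of an `(mn)×(mn)` matrix viewed as an `m×m` array of `n×n` blocks:
the `m²×n²` matrix whose rows are the vectorizations of the blocks. -/
def realign {m n : ℕ} (Z : Matrix (Fin m × Fin n) (Fin m × Fin n) ℂ) :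
    Matrix (Fin m × Fin m) (Fin n × Fin n) ℂ :=
  Matrix.of fun r c => Z (r.2, c.2) (r.1, c.1)

/-- A rank-one matrix decomposes as an outer product. -/
lemma rank_one_decomp {p q : Type*} [Fintype p] [Fintype q]
    (R : Matrix p q ℂ) (hR : R.rank = 1) :
    ∃ (u : p → ℂ) (f : q → ℂ), ∀ r c, R r c = f c * u r := by
  rw [Matrix.rank_eq_finrank_span_cols] at hR
  obtain ⟨v, -, hv⟩ := (finrank_eq_one_iff' (K := ℂ)
    (V := Submodule.span ℂ (Set.range Rᵀ))).mp hR
  refine ⟨fun r => v.1 r, ?_⟩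
  have hcol : ∀ c : q, ∃ k : ℂ, ∀ r, R r c = k * v.1 r := by
    intro c
    have hmem : Rᵀ c ∈ Submodule.span ℂ (Set.range Rᵀ) :=
      Submodule.subset_span ⟨c, rfl⟩
    obtain ⟨k, hk⟩ := hv ⟨Rᵀ c, hmem⟩
    refine ⟨k, fun r => ?_⟩
    have := congrArg (fun w : Submodule.span ℂ (Set.range Rᵀ) => w.1 r) hk
    simpa [Matrix.transpose_apply, mul_comm] using this.symm
  choose f hf using hcol
  exact ⟨f, fun r c => hf c r⟩

/-- An invertible matrix whose realignment has rank 1 is a Kronecker product of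
invertible matrices. -/
theorem kronecker_factorization_of_realign_rank_one {m n : ℕ}
    (M : Matrix (Fin m × Fin n) (Fin m × Fin n) ℂ) (hM : IsUnit M)
    (hR : (realign M).rank = 1) :
    ∃ (m₁ : Matrix (Fin m) (Fin m) ℂ) (m₂ : Matrix (Fin n) (Fin n) ℂ),
      IsUnit m₁ ∧ IsUnit m₂ ∧ M = m₁ ⊗ₖ m₂ := by
  obtain ⟨u, f, huf⟩ := rank_one_decomp (realign M) hR
  set A : Matrix (Fin m) (Fin m) ℂ := Matrix.of fun a c => u (c, a) with hA
  set B : Matrix (Fin n) (Fin n) ℂ := Matrix.of fun b d => f (d, b) with hB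
  have hMAB : M = A ⊗ₖ B := by
    ext ⟨a, b⟩ ⟨c, d⟩
    have := huf (c, a) (d, b)
    simp only [realign, Matrix.of_apply] at this
    simp [Matrix.kroneckerMap_apply, hA, hB, this, mul_comm]
  -- nondegeneracy
  have hm : 0 < m := by
    rcases Nat.eq_zero_or_pos m with h | h
    · exfalso
      have := (realign M).rank_le_card_height
      subst h
      simp at this
      omega
    · exact h
  have hn : 0 < n := by
    rcases Nat.eq_zero_or_pos n with h | h
    · exfalso
      have := (realign M).rank_le_card_width
      subst h
      simp at this
      omega
    · exact h
  have hdet : M.det ≠ 0 := by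
    simpa [isUnit_iff_ne_zero] using (Matrix.isUnit_iff_isUnit_det M).mp hM
  rw [hMAB, Matrix.det_kronecker] at hdet
  have hdA : A.det ≠ 0 := fun h => hdet (by simp [h, pow_eq_zero_iff hn.ne'])
  have hdB : B.det ≠ 0 := fun h => hdet (by simp [h, pow_eq_zero_iff hm.ne'])
  exact ⟨A, B, (Matrix.isUnit_iff_isUnit_det A).mpr (isUnit_iff_ne_zero.mpr hdA),
    (Matrix.isUnit_iff_isUnit_det B).mpr (isUnit_iff_ne_zero.mpr hdB), hMAB⟩
end
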